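/- In any orthomodular lattice, if a commutes with b and b commutes with c, then a ∪₁ (b ∩ c) = (a ∪ b) ∩ (a ∪₁ c), where x ∪₁ y := x ∪ (x' ∩ y); consequently a ∪₁ (b ∩₁ c) = (a ∪₁ b) ∩₁ (a ∪₁ c). -/

import Mathlib

class Ortholattice (α : Type*) extends Lattice α, BoundedOrder α, Compl α where
  compl_compl : ∀ a : α, aᶜᶜ = a
  sup_compl : ∀ a : α, a ⊔ aᶜ = ⊤
  inf_compl : ∀ a : α, a ⊓ aᶜ = ⊥
  compl_antitone : ∀ a b : α, a ≤ b → bᶜ ≤ aᶜ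

class OrthomodularLattice (α : Type*) extends Ortholattice α where
  orthomodular : ∀ a b : α, a ≤ b → b = a ⊔ (aᶜ ⊓ b)

namespace OMLAux

variable {α : Type*} [OrthomodularLattice α]

open Ortholattice OrthomodularLattice

lemma cc (a : α) : aᶜᶜ = a := Ortholattice.compl_compl a

lemma anti {a b : α} (h : a ≤ b) : bᶜ ≤ aᶜ := Ortholattice.compl_antitone a b h

lemma csup (a b : α) : (a ⊔ b)ᶜ = aᶜ ⊓ bᶜ := by
  apply le_antisymm (le_inf (anti le_sup_left) (anti le_sup_right))
  have h : a ⊔ b ≤ (aᶜ ⊓ bᶜ)ᶜ := by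
    apply sup_le
    · have := anti (inf_le_left : aᶜ ⊓ bᶜ ≤ aᶜ); rwa [cc] at this
    · have := anti (inf_le_right : aᶜ ⊓ bᶜ ≤ bᶜ); rwa [cc] at this
  have := anti h
  rwa [cc] at this

lemma cinf (a b : α) : (a ⊓ b)ᶜ = aᶜ ⊔ bᶜ := by
  rw [← cc (aᶜ ⊔ bᶜ), csup, cc, cc]

/-- dual orthomodular law -/
lemma dualOM {y a : α} (h : y ≤ a) : y = a ⊓ (aᶜ ⊔ y) := by
  have h2 := orthomodular aᶜ yᶜ (anti h)
  have h3 : yᶜᶜ = (aᶜ ⊔ (aᶜᶜ ⊓ yᶜ))ᶜ := by rw [← h2]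
  simpa [csup, cinf, cc] using h3

def Cm (a b : α) : Prop := a = (a ⊓ b) ⊔ (a ⊓ bᶜ)

lemma Cm_of_le {a b : α} (h : a ≤ b) : Cm a b := by
  unfold Cm
  rw [inf_eq_left.mpr h]
  exact (sup_eq_left.mpr inf_le_left).symm

lemma Cm_of_ge {a b : α} (h : b ≤ a) : Cm a b := by
  unfold Cm
  rw [inf_eq_right.mpr h, inf_comm]
  exact orthomodular b a h

lemma Cm.complr {a b : α} (h : Cm a b) : Cm a bᶜ := by
  unfold Cm at *
  rw [cc, sup_comm]
  exact h

lemma Cm.symm {a b : α} (h : Cm a b) : Cm b a := by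
  unfold Cm at *
  have hb : b = (a ⊓ b) ⊔ ((a ⊓ b)ᶜ ⊓ b) := orthomodular _ _ inf_le_right
  have hle : a ≤ (a ⊓ b) ⊔ bᶜ := by
    nth_rewrite 1 [h]
    exact sup_le le_sup_left (le_sup_of_le_right inf_le_right)
  have hc : (a ⊓ b)ᶜ ⊓ b ≤ aᶜ := by
    have := anti hle
    rw [csup, cc] at this
    exact this
  apply le_antisymm
  · nth_rewrite 1 [hb]
    exact sup_le (le_sup_of_le_left (by rw [inf_comm]))
      (le_sup_of_le_right (le_inf inf_le_right hc))
  · exact sup_le inf_le_left inf_le_left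

lemma Cm.compll {a b : α} (h : Cm a b) : Cm aᶜ b := h.symm.complr.symm

/-- key meet formula -/
lemma lemA {a b : α} (h : Cm a b) : a ⊓ (aᶜ ⊔ b) = a ⊓ b := by
  have hs := h.symm
  have heq : aᶜ ⊔ b = aᶜ ⊔ (a ⊓ b) := by
    apply le_antisymm
    · apply sup_le le_sup_left
      nth_rewrite 1 [hs]
      exact sup_le (le_sup_of_le_right (by rw [inf_comm])) (le_sup_of_le_left inf_le_right)
    · exact sup_le le_sup_left (le_sup_of_le_right inf_le_right)
  rw [heq]
  exact (dualOM inf_le_left).symm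

/-- Foulis–Holland, meet form -/
lemma FH_inf {a b c : α} (hb : Cm a b) (hc : Cm a c) :
    a ⊓ (b ⊔ c) = (a ⊓ b) ⊔ (a ⊓ c) := by
  set d := (a ⊓ b) ⊔ (a ⊓ c) with hd
  have hda : d ≤ a := sup_le inf_le_left inf_le_left
  have hbd : b ≤ aᶜ ⊔ d := by
    nth_rewrite 1 [hb.symm]
    exact sup_le (le_sup_of_le_right (le_sup_of_le_left (by rw [inf_comm])))
      (le_sup_of_le_left inf_le_right)
  have hcd : c ≤ aᶜ ⊔ d := by
    nth_rewrite 1 [hc.symm]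
    exact sup_le (le_sup_of_le_right (le_sup_of_le_right (by rw [inf_comm])))
      (le_sup_of_le_left inf_le_right)
  apply le_antisymm
  · calc a ⊓ (b ⊔ c) ≤ a ⊓ (aᶜ ⊔ d) := inf_le_inf_left a (sup_le hbd hcd)
      _ = d := (dualOM hda).symm
  · exact sup_le (inf_le_inf_left a le_sup_left) (inf_le_inf_left a le_sup_right)

/-- Foulis–Holland, join form -/
lemma FH_sup {a b c : α} (hb : Cm a b) (hc : Cm a c) :
    a ⊔ (b ⊓ c) = (a ⊔ b) ⊓ (a ⊔ c) := by
  have h := FH_inf (hb.compll.complr) (hc.compll.complr)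
  have h2 := congrArg (·ᶜ) h
  simpa [csup, cinf, cc] using h2

lemma Cm.inf {a b c : α} (hb : Cm a b) (hc : Cm a c) : Cm a (b ⊓ c) := by
  set t := (a ⊓ (b ⊓ c)) ⊔ ((a ⊓ bᶜ) ⊔ (a ⊓ cᶜ)) with ht
  have hta : t ≤ a := sup_le inf_le_left (sup_le inf_le_left inf_le_left)
  have h1 : tᶜ ⊓ a ≤ a ⊓ b := by
    have : tᶜ ≤ aᶜ ⊔ b := by
      have := anti (le_sup_of_le_right (le_sup_left (a := a ⊓ bᶜ)) : a ⊓ bᶜ ≤ t)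
      rw [cinf, cc] at this
      exact this
    calc tᶜ ⊓ a ≤ a ⊓ (aᶜ ⊔ b) := le_inf inf_le_right (le_trans inf_le_left this)
      _ = a ⊓ b := lemA hb
  have h2 : tᶜ ⊓ a ≤ a ⊓ c := by
    have : tᶜ ≤ aᶜ ⊔ c := by
      have := anti (le_sup_of_le_right (le_sup_right (b := a ⊓ cᶜ)) : a ⊓ cᶜ ≤ t)
      rw [cinf, cc] at this
      exact this
    calc tᶜ ⊓ a ≤ a ⊓ (aᶜ ⊔ c) := le_inf inf_le_right (le_trans inf_le_left this)
      _ = a ⊓ c := lemA hc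
  have h3 : tᶜ ⊓ a ≤ t :=
    le_sup_of_le_left (le_inf (le_trans h1 inf_le_left)
      (le_inf (le_trans h1 inf_le_right) (le_trans h2 inf_le_right)))
  have hbot : tᶜ ⊓ a = ⊥ := by
    apply le_antisymm _ bot_le
    have : tᶜ ⊓ a ≤ t ⊓ tᶜ := le_inf h3 inf_le_left
    rw [Ortholattice.inf_compl] at this
    exact this
  have := orthomodular t a hta
  rw [hbot, sup_bot_eq] at this
  unfold Cm
  nth_rewrite 1 [this]
  rw [ht, cinf, FH_inf hb.complr hc.complr]

lemma Cm.sup {a b c : α} (hb : Cm a b) (hc : Cm a c) : Cm a (b ⊔ c) := by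
  have h := (hb.complr.inf hc.complr).complr
  rwa [cinf, cc, cc] at h

lemma sup1 {a b : α} (h : Cm a b) : a ⊔ (aᶜ ⊓ b) = a ⊔ b := by
  apply le_antisymm
  · exact sup_le le_sup_left (le_sup_of_le_right inf_le_right)
  · apply sup_le le_sup_left
    nth_rewrite 1 [h.symm]
    exact sup_le (le_sup_of_le_left inf_le_right)
      (le_sup_of_le_right (by rw [inf_comm]))

end OMLAux

open OMLAux in
theorem stmt10 {α : Type*} [OrthomodularLattice α] (a b c : α) (hab : a = (a ⊓ b) ⊔ (a ⊓ bᶜ)) (hbc : b = (b ⊓ c) ⊔ (b ⊓ cᶜ)) :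
    (a ⊔ (aᶜ ⊓ (b ⊓ c)) = (a ⊔ b) ⊓ (a ⊔ (aᶜ ⊓ c))) ∧
    (a ⊔ (aᶜ ⊓ (b ⊓ (bᶜ ⊔ c))) = (a ⊔ (aᶜ ⊓ b)) ⊓ ((a ⊔ (aᶜ ⊓ b))ᶜ ⊔ (a ⊔ (aᶜ ⊓ c)))) := by
  have hab' : Cm a b := hab
  have hbc' : Cm b c := hbc
  have hCac : Cm a (aᶜ ⊓ c) := by
    unfold Cm
    have h1 : a ⊓ (aᶜ ⊓ c) = ⊥ := by
      apply le_antisymm _ bot_le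
      calc a ⊓ (aᶜ ⊓ c) ≤ a ⊓ aᶜ := inf_le_inf_left a inf_le_left
        _ = ⊥ := Ortholattice.inf_compl a
    have h2 : a ⊓ (aᶜ ⊓ c)ᶜ = a := by
      apply inf_eq_left.mpr
      rw [cinf, cc]
      exact le_sup_left
    rw [h1, h2, bot_sup_eq]
  have part1 : a ⊔ (aᶜ ⊓ (b ⊓ c)) = (a ⊔ b) ⊓ (a ⊔ (aᶜ ⊓ c)) := by
    rw [← FH_sup hab' hCac]
    congr 1
    rw [inf_left_comm]
  refine ⟨part1, ?_⟩
  have hbD : Cm b (a ⊔ (aᶜ ⊓ c)) :=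
    Cm.sup hab'.symm (Cm.inf hab'.symm.complr hbc')
  have hX : Cm (a ⊔ b) (a ⊔ (aᶜ ⊓ c)) :=
    (Cm.sup (Cm_of_le le_sup_left).symm hbD.symm).symm
  rw [lemA hbc', sup1 hab', lemA hX]
  exact part1
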